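/- Let α ∈ (0,∞) be badly approximable and define m̃_α(η) := sup_{t ∈ [−η, η]} |2 + e^{iπt} + e^{iπαt}|^{−1}. Then there exist c, C, η₀ > 0 such that c·η² ≤ m̃_α(η) ≤ C·η² for all η ≥ η₀. -/

import Mathlib

/-!
Write `F(t) = 2 + e^{iπt} + e^{iπαt}`. Its real part is `(1 + cos πt) + (1 + cos παt)`, and
`1 + cos πx ≥ 2 (x - n)²` when `n` is an odd integer with `|x - n| ≤ 1`. Taking odd `n, m` nearest
to `t` and `αt`, bad approximability gives `c / |n| ≤ |nα - m| ≲ |t - n| + |αt - m|`, so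
`|F(t)| ≳ η⁻²` for `|t| ≤ η`.

Conversely, if `n, m` are odd, `|n| < η` and `θ = nα - m = O(1/η)`, put `δ = θ / (1 + α)`: at
`t = n - δ` we have `αt = m + δ`, the two exponentials are `-e^{∓iπδ}`, and `F(t) = 2 - 2 cos πδ
= O(η⁻²)`. Such odd pairs exist: Dirichlet's theorem gives a reduced approximation `p₁ / q₁`
with `q₁ ≤ N`, bad approximability forces `q₁ ≳ N`, and completing `(q₁, p₁)` to a basis
`(q₁, p₁), (q₂, p₂)` of `ℤ²` with `0 ≤ q₂ < q₁` yields a second approximation of the same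
quality. One of the three vectors `v₁, v₂, v₁ + v₂` of a basis of `ℤ²` has both coordinates odd.
-/

/-- The function `m̃_α(η) = sup_{t ∈ [-η, η]} |2 + e^{iπt} + e^{iπαt}|⁻¹`. -/
noncomputable def mTilde (α η : ℝ) : ℝ :=
  ⨆ t : Set.Icc (-η) η,
    (‖2 + Complex.exp (Real.pi * ((t : ℝ) : ℂ) * Complex.I)
      + Complex.exp (Real.pi * (α : ℂ) * ((t : ℝ) : ℂ) * Complex.I)‖)⁻¹

open Real

lemma odd_pair_of_odd_det {a b c d : ℤ} (h : Odd (a * d - b * c)) :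
    (Odd a ∧ Odd b) ∨ (Odd c ∧ Odd d) ∨ (Odd (a + c) ∧ Odd (b + d)) := by
  simp only [Int.odd_sub, Int.odd_mul, Int.odd_add, ← Int.not_odd_iff_even] at h ⊢
  tauto

lemma exists_det_eq_one_of_isCoprime {p q : ℤ} (h : IsCoprime p q) (hq : 0 < q) :
    ∃ p' q' : ℤ, 0 ≤ q' ∧ q' < q ∧ q * p' - p * q' = 1 := by
  obtain ⟨u, v, huv⟩ := h
  refine ⟨v - (-u) / q * p, (-u) % q, Int.emod_nonneg _ hq.ne', Int.emod_lt_of_pos _ hq, ?_⟩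
  rw [Int.emod_def]
  linear_combination huv

lemma le_abs_mul_abs_mul_sub_of_div_sq_le {α c x y : ℝ} (hy : y ≠ 0)
    (h : c / y ^ 2 ≤ |α - x / y|) : c ≤ |y| * |y * α - x| := by
  have : |y| * |y * α - x| = y ^ 2 * |α - x / y| := by
    rw [show y * α - x = y * (α - x / y) by field_simp, abs_mul, ← mul_assoc, ← sq, sq_abs]
  rw [this, ← div_le_iff₀' (by positivity)]
  exact h

lemma exists_odd_abs_sub_le_one (x : ℝ) : ∃ n : ℤ, Odd n ∧ |x - n| ≤ 1 := by
  refine ⟨2 * round ((x - 1) / 2) + 1, odd_two_mul_add_one _, ?_⟩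
  have h := abs_sub_round ((x - 1) / 2)
  rw [abs_le] at h ⊢
  push_cast
  constructor <;> linarith

lemma two_mul_sq_sub_le_one_add_cos {x : ℝ} {n : ℤ} (hn : Odd n) (h : |x - n| ≤ 1) :
    2 * (x - n) ^ 2 ≤ 1 + cos (π * x) := by
  have hπ : |π * (x - n)| ≤ π := by
    rw [abs_mul, abs_of_pos pi_pos]; nlinarith [pi_pos]
  have hcos : cos (π * x) = -cos (π * (x - n)) := by
    rw [show π * x = π * (x - n) + n * π by ring, cos_add_int_mul_pi, hn.neg_one_zpow, neg_one_mul]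
  have := cos_le_one_sub_mul_cos_sq hπ
  rw [hcos]
  field_simp at this
  nlinarith [pi_pos]

lemma exp_pi_mul_odd_add_mul_I {k : ℤ} (hk : Odd k) (z : ℂ) :
    Complex.exp (π * (k + z) * Complex.I) = -Complex.exp (π * z * Complex.I) := by
  rw [mul_add, add_mul, Complex.exp_add, show (π : ℂ) * k * Complex.I = k * (π * Complex.I) by ring,
    Complex.exp_int_mul, Complex.exp_pi_mul_I, hk.neg_one_zpow, neg_one_mul]

-- `mTilde α η` unfolds to `⨆ t : Set.Icc (-η) η, ‖expSum α t‖⁻¹`.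
noncomputable def expSum (α t : ℝ) : ℂ :=
  2 + Complex.exp (π * t * Complex.I) + Complex.exp (π * α * t * Complex.I)

lemma expSum_re (α t : ℝ) :
    (expSum α t).re = (1 + cos (π * t)) + (1 + cos (π * (α * t))) := by
  simp only [expSum, Complex.add_re, Complex.re_ofNat]
  rw [← Complex.ofReal_mul, Complex.exp_ofReal_mul_I_re, mul_assoc (π : ℂ), ← Complex.ofReal_mul,
    ← Complex.ofReal_mul, Complex.exp_ofReal_mul_I_re]
  ring

lemma expSum_eq_of_odd {α : ℝ} {n m : ℤ} (hn : Odd n) (hm : Odd m) {t δ : ℝ}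
    (ht : t = n - δ) (hαt : α * t = m + δ) : expSum α t = ((2 - 2 * cos (π * δ) : ℝ) : ℂ) := by
  have e₁ : (π : ℂ) * t * Complex.I = π * (n + ((-δ : ℝ) : ℂ)) * Complex.I := by
    rw [ht]; push_cast; ring
  have e₂ : (π : ℂ) * α * t * Complex.I = π * (m + (δ : ℂ)) * Complex.I := by
    rw [mul_assoc (π : ℂ), ← Complex.ofReal_mul, hαt]; push_cast; ring
  rw [expSum, e₁, e₂, exp_pi_mul_odd_add_mul_I hn, exp_pi_mul_odd_add_mul_I hm]
  push_cast
  rw [Complex.two_cos]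
  ring_nf

lemma norm_expSum_le_of_odd {α : ℝ} {n m : ℤ} (hn : Odd n) (hm : Odd m) {t δ : ℝ}
    (ht : t = n - δ) (hαt : α * t = m + δ) : ‖expSum α t‖ ≤ π ^ 2 * δ ^ 2 := by
  rw [expSum_eq_of_odd hn hm ht hαt, Complex.norm_real, Real.norm_eq_abs,
    abs_of_nonneg (by linarith [cos_le_one (π * δ)])]
  nlinarith [one_sub_sq_div_two_le_cos (x := π * δ)]

section BadlyApproximable

variable {α c : ℝ} (hc : 0 < c) (hα : ∀ p q : ℤ, q ≠ 0 → c ≤ |(q : ℝ)| * |q * α - p|)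
include hc hα

lemma exists_unimodular_approximations {N : ℕ} (hN : 0 < N) :
    ∃ p₁ q₁ p₂ q₂ : ℤ, q₁ * p₂ - p₁ * q₂ = 1 ∧ 0 ≤ q₂ ∧ q₂ < q₁ ∧ q₁ ≤ N ∧
      |q₁ * α - p₁| ≤ 1 / (N + 1) ∧ |q₂ * α - p₂| ≤ 2 / (c * (N + 1)) := by
  obtain ⟨r, hr, hrN⟩ := Real.exists_rat_abs_sub_le_and_den_le α hN
  have hq₁ : (0 : ℝ) < r.den := by positivity
  have hN₁ : (0 : ℝ) < N + 1 := by positivity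
  have hε₁ : |r.den * α - r.num| ≤ 1 / (N + 1) := by
    rw [show (r.den : ℝ) * α - r.num = r.den * (α - r) by
      rw [mul_sub, Rat.cast_def]; field_simp, abs_mul, abs_of_pos hq₁]
    calc (r.den : ℝ) * |α - r| ≤ r.den * (1 / ((N + 1) * r.den)) := by gcongr
      _ = 1 / (N + 1) := by field_simp
  have hlarge : c * (N + 1) ≤ r.den := by
    have := hα r.num r.den (by simp)
    push_cast at this
    rw [abs_of_pos hq₁] at this
    rw [← le_div_iff₀ hN₁]
    calc c ≤ r.den * |r.den * α - r.num| := this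
      _ ≤ r.den * (1 / (N + 1)) := by gcongr
      _ = r.den / (N + 1) := by ring
  obtain ⟨p₂, q₂, hq₂, hq₂₁, hdet⟩ :=
    exists_det_eq_one_of_isCoprime (Rat.isCoprime_num_den r) (by exact_mod_cast r.pos)
  refine ⟨r.num, r.den, p₂, q₂, hdet, hq₂, hq₂₁, by exact_mod_cast hrN, hε₁, ?_⟩
  have hq₂₁' : (q₂ : ℝ) ≤ r.den := by exact_mod_cast hq₂₁.le
  have hrN' : (r.den : ℝ) ≤ N := by exact_mod_cast hrN
  have hrel : (r.den : ℝ) * (q₂ * α - p₂) = q₂ * (r.den * α - r.num) - 1 := by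
    have : ((r.den : ℤ) : ℝ) * p₂ - r.num * q₂ = 1 := by exact_mod_cast hdet
    push_cast at this
    linear_combination -this
  have hbound : |(r.den : ℝ) * (q₂ * α - p₂)| ≤ 2 := by
    rw [hrel]
    calc |q₂ * (r.den * α - r.num) - 1| ≤ |(q₂ : ℝ)| * |r.den * α - r.num| + 1 := by
          simpa [abs_mul] using abs_sub (q₂ * (r.den * α - r.num) : ℝ) 1
      _ ≤ r.den * (1 / (N + 1)) + 1 := by
          rw [abs_of_nonneg (by exact_mod_cast hq₂)]; gcongr
      _ ≤ 2 := by
          rw [mul_one_div, div_add_one hN₁.ne', div_le_iff₀ hN₁]; linarith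
  rw [abs_mul, abs_of_pos hq₁] at hbound
  rw [le_div_iff₀ (by positivity)]
  nlinarith [abs_nonneg ((q₂ : ℝ) * α - p₂)]

lemma exists_odd_odd_abs_mul_sub_le {N : ℕ} (hN : 0 < N) :
    ∃ n m : ℤ, Odd n ∧ Odd m ∧ |(n : ℝ)| ≤ 2 * N ∧ |n * α - m| ≤ (1 + 2 / c) / (N + 1) := by
  obtain ⟨p₁, q₁, p₂, q₂, hdet, hq₂, hq₂₁, hq₁N, hε₁, hε₂⟩ :=
    exists_unimodular_approximations hc hα hN
  have hq₂' : (0 : ℝ) ≤ q₂ := by exact_mod_cast hq₂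
  have hq₂₁' : (q₂ : ℝ) < q₁ := by exact_mod_cast hq₂₁
  have hq₁N' : (q₁ : ℝ) ≤ N := by exact_mod_cast hq₁N
  have hsum : 1 / (N + 1) + 2 / (c * (N + 1)) = (1 + 2 / c) / (N + 1) := by
    field_simp
  have hε₁' : |q₁ * α - p₁| ≤ (1 + 2 / c) / (N + 1) := by
    rw [← hsum]; linarith [show 0 ≤ 2 / (c * (N + 1)) by positivity]
  have hε₂' : |q₂ * α - p₂| ≤ (1 + 2 / c) / (N + 1) := by
    rw [← hsum]; linarith [show (0 : ℝ) ≤ 1 / (N + 1) by positivity]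
  rcases odd_pair_of_odd_det (hdet ▸ odd_one) with ⟨hq, hp⟩ | ⟨hq, hp⟩ | ⟨hq, hp⟩
  · exact ⟨q₁, p₁, hq, hp, abs_le.mpr ⟨by linarith, by linarith⟩, hε₁'⟩
  · exact ⟨q₂, p₂, hq, hp, abs_le.mpr ⟨by linarith, by linarith⟩, hε₂'⟩
  · refine ⟨q₁ + q₂, p₁ + p₂, hq, hp, ?_, ?_⟩ <;> push_cast
    · exact abs_le.mpr ⟨by linarith, by linarith⟩
    · rw [← hsum, show ((q₁ : ℝ) + q₂) * α - (p₁ + p₂) = (q₁ * α - p₁) + (q₂ * α - p₂) by ring]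
      exact (abs_add_le _ _).trans (add_le_add hε₁ hε₂)

lemma sq_le_norm_expSum {η t : ℝ} (hη : 1 ≤ η) (ht : |t| ≤ η) :
    (c / (2 * (|α| + 1) * η)) ^ 2 ≤ ‖expSum α t‖ := by
  obtain ⟨n, hn, htn⟩ := exists_odd_abs_sub_le_one t
  obtain ⟨m, hm, hαtm⟩ := exists_odd_abs_sub_le_one (α * t)
  have hn₀ : n ≠ 0 := by rintro rfl; simp at hn
  have hnη : |(n : ℝ)| ≤ 2 * η := by
    have := abs_sub_abs_le_abs_sub (n : ℝ) t
    rw [abs_sub_comm] at this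
    linarith
  have hnm : |n * α - m| ≤ |α| * |t - n| + |α * t - m| := by
    calc |n * α - m| = |(α * t - m) - α * (t - n)| := by ring_nf
      _ ≤ |α * t - m| + |α * (t - n)| := abs_sub _ _
      _ = |α| * |t - n| + |α * t - m| := by rw [abs_mul]; ring
  have hc' : c ≤ 2 * η * ((|α| + 1) * (|t - n| + |α * t - m|)) :=
    calc c ≤ |(n : ℝ)| * |n * α - m| := hα m n hn₀
      _ ≤ 2 * η * (|α| * |t - n| + |α * t - m|) := by gcongr
      _ ≤ 2 * η * ((|α| + 1) * (|t - n| + |α * t - m|)) := by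
          gcongr; nlinarith [abs_nonneg (t - n), abs_nonneg (α * t - m), abs_nonneg α]
  calc (c / (2 * (|α| + 1) * η)) ^ 2 ≤ (|t - n| + |α * t - m|) ^ 2 := by
        gcongr
        rw [div_le_iff₀ (by positivity)]
        linarith
    _ ≤ 2 * (t - n) ^ 2 + 2 * (α * t - m) ^ 2 := by
        nlinarith [sq_abs (t - n), sq_abs (α * t - m), sq_nonneg (|t - n| - |α * t - m|)]
    _ ≤ (expSum α t).re := by
        rw [expSum_re]
        linarith [two_mul_sq_sub_le_one_add_cos hn htn, two_mul_sq_sub_le_one_add_cos hm hαtm]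
    _ ≤ ‖expSum α t‖ := Complex.re_le_norm _

lemma exists_norm_expSum_le (hα₀ : 0 ≤ α) {η : ℝ} (hη : 4 * (1 + 2 / c) + 3 ≤ η) :
    ∃ t, |t| ≤ η ∧ ‖expSum α t‖ ≤ (4 * π * (1 + 2 / c)) ^ 2 / η ^ 2 := by
  have hK : 1 ≤ 1 + 2 / c := by linarith [show 0 ≤ 2 / c by positivity]
  set N := ⌊(η - 1) / 2⌋₊
  have hN : 0 < N := Nat.floor_pos.mpr (by linarith)
  have hN₁ : (N : ℝ) ≤ (η - 1) / 2 := Nat.floor_le (by linarith)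
  have hN₂ : (η - 1) / 2 < N + 1 := Nat.lt_floor_add_one _
  obtain ⟨n, m, hn, hm, hnN, hθ⟩ := exists_odd_odd_abs_mul_sub_le hc hα hN
  set θ := n * α - m
  set δ := θ / (1 + α)
  have hθη : |θ| ≤ 4 * (1 + 2 / c) / η := by
    refine hθ.trans ?_
    rw [div_le_div_iff₀ (by positivity) (by linarith)]
    nlinarith
  have hδθ : |δ| ≤ |θ| := by
    rw [abs_div, abs_of_pos (by linarith : 0 < 1 + α)]
    exact div_le_self (abs_nonneg θ) (by linarith)
  have hδ : |δ| ≤ 4 * (1 + 2 / c) / η := hδθ.trans hθη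
  have hδ₁ : |δ| ≤ 1 := hδ.trans ((div_le_one (by linarith)).mpr (by linarith))
  refine ⟨n - δ, ?_, ?_⟩
  · linarith [abs_sub (n : ℝ) δ]
  · calc ‖expSum α (n - δ)‖ ≤ π ^ 2 * δ ^ 2 :=
          norm_expSum_le_of_odd hn hm rfl (by simp only [δ, θ]; field_simp; ring)
      _ ≤ π ^ 2 * (4 * (1 + 2 / c) / η) ^ 2 := by
          rw [← sq_abs δ]; gcongr
      _ = (4 * π * (1 + 2 / c)) ^ 2 / η ^ 2 := by ring

end BadlyApproximable

/-- For badly approximable `α > 0`, the function `m̃_α` grows exactly quadratically. -/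
theorem mTilde_quadratic_of_badly_approximable (α : ℝ) (hpos : 0 < α)
    (hbad : ∃ c₀ : ℝ, 0 < c₀ ∧ ∀ p q : ℤ, q ≠ 0 →
      c₀ / (q : ℝ) ^ 2 ≤ |α - (p : ℝ) / (q : ℝ)|) :
    ∃ c C η₀ : ℝ, 0 < c ∧ 0 < C ∧ 0 < η₀ ∧ ∀ η : ℝ, η₀ ≤ η →
      c * η ^ 2 ≤ mTilde α η ∧ mTilde α η ≤ C * η ^ 2 := by
  obtain ⟨c₀, hc, hbad⟩ := hbad
  have hα : ∀ p q : ℤ, q ≠ 0 → c₀ ≤ |(q : ℝ)| * |q * α - p| := fun p q hq =>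
    le_abs_mul_abs_mul_sub_of_div_sq_le (by exact_mod_cast hq) (hbad p q hq)
  set K := 1 + 2 / c₀
  refine ⟨((4 * π * K) ^ 2)⁻¹, (2 * (|α| + 1) / c₀) ^ 2, 4 * K + 3, by positivity,
    by positivity, by positivity, fun η hη => ?_⟩
  have hη₁ : 1 ≤ η := by linarith [show 0 ≤ K by positivity]
  have hnorm : ∀ t : Set.Icc (-η) η, (c₀ / (2 * (|α| + 1) * η)) ^ 2 ≤ ‖expSum α t‖ :=
    fun t => sq_le_norm_expSum hc hα hη₁ (abs_le.mpr t.2)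
  have hupper : ∀ t : Set.Icc (-η) η, ‖expSum α t‖⁻¹ ≤ (2 * (|α| + 1) / c₀) ^ 2 * η ^ 2 := by
    intro t
    calc ‖expSum α t‖⁻¹ ≤ ((c₀ / (2 * (|α| + 1) * η)) ^ 2)⁻¹ := inv_anti₀ (by positivity) (hnorm t)
      _ = (2 * (|α| + 1) / c₀) ^ 2 * η ^ 2 := by field_simp
  obtain ⟨t, ht, hFt⟩ := exists_norm_expSum_le hc hα hpos.le hη
  let t' : Set.Icc (-η) η := ⟨t, abs_le.mp ht⟩
  have : Nonempty (Set.Icc (-η) η) := ⟨t'⟩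
  refine ⟨?_, ciSup_le hupper⟩
  calc ((4 * π * K) ^ 2)⁻¹ * η ^ 2 = ((4 * π * K) ^ 2 / η ^ 2)⁻¹ := by field_simp
    _ ≤ ‖expSum α t‖⁻¹ := inv_anti₀ (lt_of_lt_of_le (by positivity) (hnorm t')) hFt
    _ ≤ mTilde α η := le_ciSup ⟨_, Set.forall_mem_range.2 hupper⟩ t'
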